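/- Let R be a biinvertible n²×n² complex R-matrix with associated matrices U and V. Then the following second partial trace identities hold: Tr₂(RP·(I⊗V)) = I, Tr₂((RP)⁻¹·(I⊗V)) = VU, Tr₂(PR·(I⊗U)) = I, and Tr₂((PR)⁻¹·(I⊗U)) = UV. -/
import Mathlib


open scoped BigOperators

namespace Enhance

noncomputable section

/-- n×n complex matrices. -/
abbrev Mat1 (n : ℕ) := Matrix (Fin n) (Fin n) ℂ

/-- n²×n² complex matrices, indexed by pairs. -/
abbrev Mat2 (n : ℕ) := Matrix (Fin n × Fin n) (Fin n × Fin n) ℂ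

/-- n³×n³ complex matrices, indexed by triples. -/
abbrev Mat3 (n : ℕ) := Matrix (Fin n × Fin n × Fin n) (Fin n × Fin n × Fin n) ℂ

/-- Kronecker product of two n×n matrices: (μ⊗ν)^{ab}_{cd} = μ^a_c ν^b_d. -/
def kron {n : ℕ} (μ ν : Mat1 n) : Mat2 n :=
  Matrix.of fun p q => μ p.1 q.1 * ν p.2 q.2

/-- The permutation matrix P^{ab}_{cd} = δ^a_d δ^b_c. -/
def Pmat (n : ℕ) : Mat2 n :=
  Matrix.of fun p q => if p.1 = q.2 ∧ p.2 = q.1 then 1 else 0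

/-- A₁₂ = A ⊗ I. -/
def A12 {n : ℕ} (A : Mat2 n) : Mat3 n :=
  Matrix.of fun p q => A (p.1, p.2.1) (q.1, q.2.1) * (if p.2.2 = q.2.2 then 1 else 0)

/-- A₂₃ = I ⊗ A. -/
def A23 {n : ℕ} (A : Mat2 n) : Mat3 n :=
  Matrix.of fun p q => (if p.1 = q.1 then 1 else 0) * A (p.2.1, p.2.2) (q.2.1, q.2.2)

/-- (A₁₃)^{abc}_{def} = A^{ac}_{df} δ^b_e. -/
def A13 {n : ℕ} (A : Mat2 n) : Mat3 n :=
  Matrix.of fun p q => A (p.1, p.2.2) (q.1, q.2.2) * (if p.2.1 = q.2.1 then 1 else 0)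

/-- First partial transpose: (A^{t₁})^{ab}_{cd} = A^{cb}_{ad}. -/
def t1 {n : ℕ} (A : Mat2 n) : Mat2 n :=
  Matrix.of fun p q => A (q.1, p.2) (p.1, q.2)

/-- Second partial transpose: (A^{t₂})^{ab}_{cd} = A^{ad}_{cb}. -/
def t2 {n : ℕ} (A : Mat2 n) : Mat2 n :=
  Matrix.of fun p q => A (p.1, q.2) (q.1, p.2)

/-- Second partial trace: Tr₂(A)^a_c = Σ_d A^{ad}_{cd}. -/
def Tr2 {n : ℕ} (A : Mat2 n) : Mat1 n :=
  Matrix.of fun a c => ∑ d, A (a, d) (c, d)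

/-- The quantum Yang–Baxter equation R₁₂R₁₃R₂₃ = R₂₃R₁₃R₁₂. -/
def QYB {n : ℕ} (R : Mat2 n) : Prop :=
  A12 R * A13 R * A23 R = A23 R * A13 R * A12 R

/-- The braid equation S₁₂S₂₃S₁₂ = S₂₃S₁₂S₂₃. -/
def Braid {n : ℕ} (S : Mat2 n) : Prop :=
  A12 S * A23 S * A12 S = A23 S * A12 S * A23 S

/-- R is biinvertible if both R and R^{t₂} are invertible. -/
def Biinv {n : ℕ} (R : Mat2 n) : Prop :=
  IsUnit R ∧ IsUnit (t2 R)

/-- R̃ = ((R^{t₂})⁻¹)^{t₂}. -/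
noncomputable def Rtil {n : ℕ} (R : Mat2 n) : Mat2 n := t2 (t2 R)⁻¹

/-- U^i_j = Σ_a R̃^{ai}_{ja}. -/
noncomputable def Umat {n : ℕ} (R : Mat2 n) : Mat1 n :=
  Matrix.of fun i j => ∑ a, Rtil R (a, i) (j, a)

/-- V^i_j = Σ_a R̃^{ia}_{aj}. -/
noncomputable def Vmat {n : ℕ} (R : Mat2 n) : Mat1 n :=
  Matrix.of fun i j => ∑ a, Rtil R (i, a) (a, j)

/-- Enhanced R-matrix in the sense of Definition 2 (Turaev, tangle category version). -/
def IsEnhanced2 {n : ℕ} (S : Mat2 n) (μ : Mat1 n) : Prop :=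
  IsUnit S ∧ IsUnit μ ∧ Braid S ∧
  S * kron μ μ = kron μ μ * S ∧
  Tr2 (S * kron 1 μ) = 1 ∧ Tr2 (S⁻¹ * kron 1 μ) = 1 ∧
  t1 (Pmat n * S⁻¹) * kron 1 μ * t1 (S * Pmat n) * kron 1 μ⁻¹ = 1 ∧
  t1 (Pmat n * S) * kron 1 μ * t1 (S⁻¹ * Pmat n) * kron 1 μ⁻¹ = 1

/-- Enhanced R-matrix in the sense of Definition 1 (Turaev, link invariant version). -/
def IsEnhanced1 {n : ℕ} (S : Mat2 n) (μ : Mat1 n) (α β : ℂ) : Prop :=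
  IsUnit S ∧ α ≠ 0 ∧ β ≠ 0 ∧ Braid S ∧
  S * kron μ μ = kron μ μ * S ∧
  Tr2 (S * kron μ μ) = (α * β) • μ ∧
  Tr2 (S⁻¹ * kron μ μ) = (α⁻¹ * β) • μ


variable {n : ℕ}

lemma Pmat_mul_apply (X : Mat2 n) (a b c d : Fin n) :
    (Pmat n * X) (a,b) (c,d) = X (b,a) (c,d) := by
  simp only [Matrix.mul_apply, Pmat, Matrix.of_apply, Fintype.sum_prod_type]
  simp [ite_and]

lemma mul_Pmat_apply (X : Mat2 n) (a b c d : Fin n) :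
    (X * Pmat n) (a,b) (c,d) = X (a,b) (d,c) := by
  simp only [Matrix.mul_apply, Pmat, Matrix.of_apply, Fintype.sum_prod_type]
  simp [ite_and]

lemma Pmat_mul_Pmat : (Pmat n * Pmat n) = (1 : Mat2 n) := by
  ext ⟨a,b⟩ ⟨c,d⟩
  rw [Pmat_mul_apply]
  simp [Pmat, Matrix.one_apply, Prod.ext_iff, and_comm]

/-! ### Component formulas for slot embeddings -/

lemma A12_mul_apply (X : Mat2 n) (M : Mat3 n) (a b c d e f : Fin n) :
    (A12 X * M) (a,b,c) (d,e,f) = ∑ p, ∑ q, X (a,b) (p,q) * M (p,q,c) (d,e,f) := by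
  simp only [Matrix.mul_apply, A12, Matrix.of_apply, Fintype.sum_prod_type]
  refine Finset.sum_congr rfl fun p _ => Finset.sum_congr rfl fun q _ => ?_
  simp [mul_ite, ite_mul, mul_comm, mul_assoc, mul_left_comm]

lemma A13_mul_apply (X : Mat2 n) (M : Mat3 n) (a b c d e f : Fin n) :
    (A13 X * M) (a,b,c) (d,e,f) = ∑ p, ∑ r, X (a,c) (p,r) * M (p,b,r) (d,e,f) := by
  simp only [Matrix.mul_apply, A13, Matrix.of_apply, Fintype.sum_prod_type]
  refine Finset.sum_congr rfl fun p _ => ?_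
  rw [Finset.sum_comm]
  refine Finset.sum_congr rfl fun r _ => ?_
  simp [mul_ite, ite_mul]

lemma A23_mul_apply (X : Mat2 n) (M : Mat3 n) (a b c d e f : Fin n) :
    (A23 X * M) (a,b,c) (d,e,f) = ∑ q, ∑ r, X (b,c) (q,r) * M (a,q,r) (d,e,f) := by
  simp only [Matrix.mul_apply, A23, Matrix.of_apply, Fintype.sum_prod_type]
  simp [ite_mul]

lemma mul_A12_apply (M : Mat3 n) (X : Mat2 n) (a b c d e f : Fin n) :
    (M * A12 X) (a,b,c) (d,e,f) = ∑ p, ∑ q, M (a,b,c) (p,q,f) * X (p,q) (d,e) := by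
  simp only [Matrix.mul_apply, A12, Matrix.of_apply, Fintype.sum_prod_type]
  refine Finset.sum_congr rfl fun p _ => Finset.sum_congr rfl fun q _ => ?_
  simp [mul_ite, ite_mul, mul_comm]

lemma mul_A23_apply (M : Mat3 n) (X : Mat2 n) (a b c d e f : Fin n) :
    (M * A23 X) (a,b,c) (d,e,f) = ∑ q, ∑ r, M (a,b,c) (d,q,r) * X (q,r) (e,f) := by
  simp only [Matrix.mul_apply, A23, Matrix.of_apply, Fintype.sum_prod_type]
  rw [Finset.sum_comm]
  refine Finset.sum_congr rfl fun q _ => ?_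
  rw [Finset.sum_comm]
  refine Finset.sum_congr rfl fun r _ => ?_
  simp [mul_ite, ite_mul, mul_comm]

/-! ### Multiplicativity of the embeddings -/

lemma A12_mul (X Y : Mat2 n) : A12 X * A12 Y = A12 (X * Y) := by
  ext ⟨a,b,c⟩ ⟨d,e,f⟩
  rw [A12_mul_apply]
  simp only [A12, Matrix.of_apply, Matrix.mul_apply, Fintype.sum_prod_type]
  rw [Finset.sum_mul]
  refine Finset.sum_congr rfl fun p _ => ?_
  rw [Finset.sum_mul]
  refine Finset.sum_congr rfl fun q _ => ?_
  ring

lemma A13_mul (X Y : Mat2 n) : A13 X * A13 Y = A13 (X * Y) := by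
  ext ⟨a,b,c⟩ ⟨d,e,f⟩
  rw [A13_mul_apply]
  simp only [A13, Matrix.of_apply, Matrix.mul_apply, Fintype.sum_prod_type]
  rw [Finset.sum_mul]
  refine Finset.sum_congr rfl fun p _ => ?_
  rw [Finset.sum_mul]
  refine Finset.sum_congr rfl fun r _ => ?_
  ring

lemma A23_mul (X Y : Mat2 n) : A23 X * A23 Y = A23 (X * Y) := by
  ext ⟨a,b,c⟩ ⟨d,e,f⟩
  rw [A23_mul_apply]
  simp only [A23, Matrix.of_apply, Matrix.mul_apply, Fintype.sum_prod_type]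
  rw [Finset.mul_sum]
  refine Finset.sum_congr rfl fun q _ => ?_
  rw [Finset.mul_sum]
  refine Finset.sum_congr rfl fun r _ => ?_
  ring

lemma A12_one : A12 (1 : Mat2 n) = 1 := by
  ext ⟨a,b,c⟩ ⟨d,e,f⟩
  simp only [A12, Matrix.of_apply, Matrix.one_apply, Prod.ext_iff]
  simp only [ite_and, mul_ite, mul_one, mul_zero, ite_mul, one_mul, zero_mul]
  split_ifs <;> rfl

lemma A13_one : A13 (1 : Mat2 n) = 1 := by
  ext ⟨a,b,c⟩ ⟨d,e,f⟩
  simp only [A13, Matrix.of_apply, Matrix.one_apply, Prod.ext_iff]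
  simp only [ite_and, mul_ite, mul_one, mul_zero, ite_mul, one_mul, zero_mul]
  split_ifs <;> rfl

lemma A23_one : A23 (1 : Mat2 n) = 1 := by
  ext ⟨a,b,c⟩ ⟨d,e,f⟩
  simp only [A23, Matrix.of_apply, Matrix.one_apply, Prod.ext_iff]
  simp only [ite_and, mul_ite, mul_one, mul_zero, ite_mul, one_mul, zero_mul]
  split_ifs <;> rfl

/-! ### The third-slot partial transpose on Mat3 -/

def t3 (M : Mat3 n) : Mat3 n :=
  Matrix.of fun p q => M (p.1, p.2.1, q.2.2) (q.1, q.2.1, p.2.2)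

lemma t3_A12_mul (X : Mat2 n) (M : Mat3 n) : t3 (A12 X * M) = A12 X * t3 M := by
  ext ⟨a,b,c⟩ ⟨d,e,f⟩
  show (A12 X * M) (a,b,f) (d,e,c) = (A12 X * t3 M) (a,b,c) (d,e,f)
  rw [A12_mul_apply, A12_mul_apply]
  rfl

lemma t3_mul_A12 (M : Mat3 n) (X : Mat2 n) : t3 (M * A12 X) = t3 M * A12 X := by
  ext ⟨a,b,c⟩ ⟨d,e,f⟩
  show (M * A12 X) (a,b,f) (d,e,c) = (t3 M * A12 X) (a,b,c) (d,e,f)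
  rw [mul_A12_apply, mul_A12_apply]
  rfl

lemma t3_A13_A23 (X Y : Mat2 n) : t3 (A13 X * A23 Y) = A23 (t2 Y) * A13 (t2 X) := by
  ext ⟨a,b,c⟩ ⟨d,e,f⟩
  show (A13 X * A23 Y) (a,b,f) (d,e,c) = _
  rw [A13_mul_apply, A23_mul_apply]
  simp only [A23, A13, t2, Matrix.of_apply]
  conv_lhs => rw [Finset.sum_comm]
  conv_rhs => rw [Finset.sum_comm]
  simp only [mul_ite, ite_mul, mul_zero, zero_mul, mul_one, one_mul,
    Finset.sum_ite_eq, Finset.sum_ite_eq', Finset.mem_univ, if_true]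
  refine Finset.sum_congr rfl fun r _ => ?_
  ring

lemma t3_A23_A13 (X Y : Mat2 n) : t3 (A23 X * A13 Y) = A13 (t2 Y) * A23 (t2 X) := by
  ext ⟨a,b,c⟩ ⟨d,e,f⟩
  show (A23 X * A13 Y) (a,b,f) (d,e,c) = _
  rw [A23_mul_apply, A13_mul_apply]
  simp only [A23, A13, t2, Matrix.of_apply]
  conv_lhs => rw [Finset.sum_comm]
  conv_rhs => rw [Finset.sum_comm]
  simp only [mul_ite, ite_mul, mul_zero, zero_mul, mul_one, one_mul,
    Finset.sum_ite_eq, Finset.sum_ite_eq', Finset.mem_univ, if_true]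
  refine Finset.sum_congr rfl fun r _ => ?_
  ring

/-! ### Tr2 component formulas -/

lemma Tr2_mul_P (X : Mat2 n) (μ : Mat1 n) :
    Tr2 ((X * Pmat n) * kron 1 μ) = Matrix.of fun a c => ∑ d, ∑ f, X (a,d) (f,c) * μ f d := by
  ext a c
  show ∑ d, ((X * Pmat n) * kron 1 μ) (a,d) (c,d) = ∑ d, ∑ f, X (a,d) (f,c) * μ f d
  refine Finset.sum_congr rfl fun d _ => ?_
  rw [Matrix.mul_apply, Fintype.sum_prod_type]
  simp only [mul_Pmat_apply, kron, Matrix.of_apply, Matrix.one_apply, ite_mul, mul_ite,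
    one_mul, zero_mul, mul_zero, mul_one]
  conv_lhs => rw [Finset.sum_comm]
  simp only [Finset.sum_ite_eq, Finset.sum_ite_eq', Finset.mem_univ, if_true]

lemma Tr2_P_mul (X : Mat2 n) (μ : Mat1 n) :
    Tr2 ((Pmat n * X) * kron 1 μ) = Matrix.of fun b d => ∑ e, ∑ q, X (e,b) (d,q) * μ q e := by
  ext b d
  show ∑ e, ((Pmat n * X) * kron 1 μ) (b,e) (d,e) = ∑ e, ∑ q, X (e,b) (d,q) * μ q e
  refine Finset.sum_congr rfl fun e _ => ?_
  rw [Matrix.mul_apply, Fintype.sum_prod_type]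
  simp only [Pmat_mul_apply, kron, Matrix.of_apply, Matrix.one_apply, ite_mul, mul_ite,
    one_mul, zero_mul, mul_zero, mul_one]
  conv_lhs => rw [Finset.sum_comm]
  simp only [Finset.sum_ite_eq, Finset.sum_ite_eq', Finset.mem_univ, if_true]

lemma t2_t2 (X : Mat2 n) : t2 (t2 X) = X := by
  ext ⟨a,b⟩ ⟨c,d⟩; rfl

/-! ### The inverse relations for the second partial transpose -/

lemma t2_Rtil (R : Mat2 n) : t2 (Rtil R) = (t2 R)⁻¹ := t2_t2 _

lemma F1 (R : Mat2 n) (hbi : Biinv R) (a b c d : Fin n) :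
    ∑ e, ∑ f, R (a,f) (e,b) * Rtil R (e,d) (c,f) = if a = c ∧ b = d then 1 else 0 := by
  have h1 : t2 R * t2 (Rtil R) = 1 := by
    rw [t2_Rtil]
    exact Matrix.mul_nonsing_inv _ ((Matrix.isUnit_iff_isUnit_det _).1 hbi.2)
  have h2 := congrFun (congrFun h1 (a,b)) (c,d)
  rw [Matrix.mul_apply, Fintype.sum_prod_type] at h2
  simpa [t2, Matrix.one_apply, Prod.ext_iff] using h2

lemma F2 (R : Mat2 n) (hbi : Biinv R) (p z d v : Fin n) :
    ∑ x, ∑ c, Rtil R (p,c) (x,z) * R (x,v) (d,c) = if p = d ∧ z = v then 1 else 0 := by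
  have h1 : t2 (Rtil R) * t2 R = 1 := by
    rw [t2_Rtil]
    exact Matrix.nonsing_inv_mul _ ((Matrix.isUnit_iff_isUnit_det _).1 hbi.2)
  have h2 := congrFun (congrFun h1 (p,z)) (d,v)
  rw [Matrix.mul_apply, Fintype.sum_prod_type] at h2
  simpa [t2, Matrix.one_apply, Prod.ext_iff] using h2

/-! ### Claim 1 -/

lemma claim1 (R : Mat2 n) (hbi : Biinv R) :
    Tr2 ((R * Pmat n) * kron 1 (Vmat R)) = 1 := by
  rw [Tr2_mul_P]
  ext a c
  show (∑ d, ∑ f, R (a,d) (f,c) * Vmat R f d) = (1 : Mat1 n) a c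
  calc ∑ d, ∑ f, R (a,d) (f,c) * Vmat R f d
      = ∑ d, ∑ f, ∑ g, R (a,d) (f,c) * Rtil R (f,g) (g,d) := by
        refine Finset.sum_congr rfl fun d _ => Finset.sum_congr rfl fun f _ => ?_
        simp [Vmat, Finset.mul_sum]
    _ = ∑ d, ∑ g, ∑ f, R (a,d) (f,c) * Rtil R (f,g) (g,d) := by
        refine Finset.sum_congr rfl fun d _ => ?_
        rw [Finset.sum_comm]
    _ = ∑ g, ∑ d, ∑ f, R (a,d) (f,c) * Rtil R (f,g) (g,d) := by rw [Finset.sum_comm]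
    _ = ∑ g, ∑ f, ∑ d, R (a,d) (f,c) * Rtil R (f,g) (g,d) := by
        refine Finset.sum_congr rfl fun g _ => ?_
        rw [Finset.sum_comm]
    _ = ∑ g, (if a = g ∧ c = g then 1 else 0) := by
        refine Finset.sum_congr rfl fun g _ => ?_
        exact F1 R hbi a c g g
    _ = (1 : Mat1 n) a c := by
        simp only [Matrix.one_apply, ite_and, Finset.sum_ite_eq, Finset.mem_univ, if_true]
        by_cases h : a = c
        · subst h; simp
        · simp only [h, if_false]
          rw [if_neg (fun hca : c = a => h hca.symm)]

/-! ### The Yang–Baxter chain -/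

lemma Epp (R : Mat2 n) (hQYB : QYB R) (hbi : Biinv R) :
    A12 R⁻¹ * (A13 (Rtil R) * (A23 (Rtil R) * A12 R)) = A23 (Rtil R) * A13 (Rtil R) := by
  have hdR : IsUnit R.det := (Matrix.isUnit_iff_isUnit_det _).1 hbi.1
  have hdW : IsUnit (t2 R).det := (Matrix.isUnit_iff_isUnit_det _).1 hbi.2
  have hS1 : R * R⁻¹ = 1 := Matrix.mul_nonsing_inv _ hdR
  have hS2 : R⁻¹ * R = 1 := Matrix.nonsing_inv_mul _ hdR
  have hW1 : t2 R * (t2 R)⁻¹ = 1 := Matrix.mul_nonsing_inv _ hdW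
  have hW2 : (t2 R)⁻¹ * t2 R = 1 := Matrix.nonsing_inv_mul _ hdW
  -- abbreviations
  set S := R⁻¹ with hS
  set W := t2 R with hW
  set W' := (t2 R)⁻¹ with hW'
  -- products equal to one
  have p1 : A12 R * A12 S = 1 := by rw [A12_mul, hS1, A12_one]
  have p2 : A12 S * A12 R = 1 := by rw [A12_mul, hS2, A12_one]
  have p3 : A23 W * A23 W' = 1 := by rw [A23_mul, hW1, A23_one]
  have p4 : A23 W' * A23 W = 1 := by rw [A23_mul, hW2, A23_one]
  have p5 : A13 W * A13 W' = 1 := by rw [A13_mul, hW1, A13_one]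
  have p6 : A13 W' * A13 W = 1 := by rw [A13_mul, hW2, A13_one]
  -- cancellation helpers
  have c1 : ∀ M : Mat3 n, A12 R * (A12 S * M) = M := fun M => by
    rw [← mul_assoc, p1, one_mul]
  have c2 : ∀ M : Mat3 n, A12 S * (A12 R * M) = M := fun M => by
    rw [← mul_assoc, p2, one_mul]
  have c3 : ∀ M : Mat3 n, A23 W * (A23 W' * M) = M := fun M => by
    rw [← mul_assoc, p3, one_mul]
  have c4 : ∀ M : Mat3 n, A23 W' * (A23 W * M) = M := fun M => by
    rw [← mul_assoc, p4, one_mul]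
  have c5 : ∀ M : Mat3 n, A13 W * (A13 W' * M) = M := fun M => by
    rw [← mul_assoc, p5, one_mul]
  have c6 : ∀ M : Mat3 n, A13 W' * (A13 W * M) = M := fun M => by
    rw [← mul_assoc, p6, one_mul]
  -- Step 1 : E : A13 R * A23 R * A12 S = A12 S * (A23 R * A13 R)
  have E : A13 R * A23 R * A12 S = A12 S * (A23 R * A13 R) := by
    have key : A12 S * (A23 R * (A13 R * A12 R)) = A13 R * A23 R := by
      have h := congrArg (fun M => A12 S * M) hQYB
      simp only [mul_assoc] at h
      rw [← h, c2]
    calc A13 R * A23 R * A12 S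
        = A12 S * (A23 R * (A13 R * A12 R)) * A12 S := by rw [key]
      _ = A12 S * (A23 R * A13 R) := by
          simp only [mul_assoc]
          rw [p1, mul_one]
  -- Step 2 : apply t3
  have E1 : A23 W * (A13 W * A12 S) = A12 S * (A13 W * A23 W) := by
    have h := congrArg t3 E
    rw [mul_assoc] at h
    rw [show A13 R * (A23 R * A12 S) = (A13 R * A23 R) * A12 S from (mul_assoc _ _ _).symm] at h
    rw [t3_mul_A12, t3_A13_A23, t3_A12_mul, t3_A23_A13] at h
    rw [mul_assoc] at h
    exact h
  -- Step 3 : sandwich with the inverses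
  have E2 : A12 S * (A23 W' * A13 W') = A13 W' * (A23 W' * A12 S) := by
    have h := congrArg (fun M => A13 W' * (A23 W' * (M * (A23 W' * A13 W')))) E1
    simp only [mul_assoc] at h
    rw [c4, c6] at h
    rw [c3 (A13 W')] at h
    rw [show A13 W * A13 W' = 1 from p5, mul_one] at h
    exact h
  -- Step 4 : apply t3 again
  have E3 : A12 S * (A13 (Rtil R) * A23 (Rtil R)) = A23 (Rtil R) * (A13 (Rtil R) * A12 S) := by
    have h := congrArg t3 E2
    rw [show A13 W' * (A23 W' * A12 S) = (A13 W' * A23 W') * A12 S from (mul_assoc _ _ _).symm] at h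
    rw [t3_A12_mul, t3_A23_A13, t3_mul_A12, t3_A13_A23] at h
    rw [mul_assoc] at h
    exact h
  -- Step 5 : multiply by A12 R on the right
  have h := congrArg (fun M => M * A12 R) E3
  simp only [mul_assoc] at h
  rw [p2, mul_one] at h
  simpa [mul_assoc] using h

/-! ### Contraction -/

def Cmap (M : Mat3 n) : Mat1 n :=
  Matrix.of fun b d => ∑ a, ∑ c, M (a,b,c) (d,c,a)

lemma A23_A12_apply (X Y : Mat2 n) (x q z d e f : Fin n) :
    (A23 X * A12 Y) (x,q,z) (d,e,f) = ∑ v, X (q,z) (v,f) * Y (x,v) (d,e) := by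
  rw [A23_mul_apply]
  simp only [A12, Matrix.of_apply]
  simp only [mul_ite, ite_mul, mul_zero, zero_mul, mul_one, one_mul,
    Finset.sum_ite_eq, Finset.sum_ite_eq', Finset.mem_univ, if_true]

lemma Cright (X Y : Mat2 n) :
    Cmap (A23 X * A13 Y) =
      Matrix.of fun b d => ∑ r, (∑ c, X (b,c) (c,r)) * (∑ a, Y (a,r) (d,a)) := by
  ext b d
  show (∑ a, ∑ c, (A23 X * A13 Y) (a,b,c) (d,c,a)) = _
  have h : ∀ a c : Fin n, (A23 X * A13 Y) (a,b,c) (d,c,a) = ∑ r, X (b,c) (c,r) * Y (a,r) (d,a) := by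
    intro a c
    rw [A23_mul_apply]
    simp only [A13, Matrix.of_apply]
    conv_lhs => rw [Finset.sum_comm]
    simp only [mul_ite, ite_mul, mul_zero, zero_mul, mul_one, one_mul,
      Finset.sum_ite_eq, Finset.sum_ite_eq', Finset.mem_univ, if_true]
  simp only [h]
  show _ = ∑ r, (∑ c, X (b,c) (c,r)) * (∑ a, Y (a,r) (d,a))
  simp only [Finset.sum_mul, Finset.mul_sum]
  calc ∑ a, ∑ c, ∑ r, X (b,c) (c,r) * Y (a,r) (d,a)
      = ∑ a, ∑ r, ∑ c, X (b,c) (c,r) * Y (a,r) (d,a) := by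
        refine Finset.sum_congr rfl fun a _ => ?_
        rw [Finset.sum_comm]
    _ = ∑ r, ∑ a, ∑ c, X (b,c) (c,r) * Y (a,r) (d,a) := by rw [Finset.sum_comm]

lemma Cleft (R : Mat2 n) (hbi : Biinv R) (b d : Fin n) :
    Cmap (A12 R⁻¹ * (A13 (Rtil R) * (A23 (Rtil R) * A12 R))) b d
      = ∑ a, ∑ q, R⁻¹ (a,b) (d,q) * Vmat R q a := by
  have hM : ∀ a c : Fin n, (A12 R⁻¹ * (A13 (Rtil R) * (A23 (Rtil R) * A12 R))) (a,b,c) (d,c,a)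
      = ∑ p, ∑ q, R⁻¹ (a,b) (p,q) *
          (∑ x, ∑ z, Rtil R (p,c) (x,z) * (∑ v, Rtil R (q,z) (v,a) * R (x,v) (d,c))) := by
    intro a c
    rw [A12_mul_apply]
    refine Finset.sum_congr rfl fun p _ => Finset.sum_congr rfl fun q _ => ?_
    congr 1
    rw [A13_mul_apply]
    refine Finset.sum_congr rfl fun x _ => Finset.sum_congr rfl fun z _ => ?_
    congr 1
    rw [A23_A12_apply]
  show (∑ a, ∑ c, (A12 R⁻¹ * (A13 (Rtil R) * (A23 (Rtil R) * A12 R))) (a,b,c) (d,c,a)) = _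
  simp only [hM]
  refine Finset.sum_congr rfl fun a _ => ?_
  -- the inner contraction collapses via F2
  have inner : ∀ p q : Fin n,
      (∑ c, ∑ x, ∑ z, Rtil R (p,c) (x,z) * (∑ v, Rtil R (q,z) (v,a) * R (x,v) (d,c)))
        = if p = d then Vmat R q a else 0 := by
    intro p q
    calc ∑ c, ∑ x, ∑ z, Rtil R (p,c) (x,z) * (∑ v, Rtil R (q,z) (v,a) * R (x,v) (d,c))
        = ∑ c, ∑ x, ∑ z, ∑ v, (Rtil R (p,c) (x,z) * R (x,v) (d,c)) * Rtil R (q,z) (v,a) := by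
          refine Finset.sum_congr rfl fun c _ => Finset.sum_congr rfl fun x _ =>
            Finset.sum_congr rfl fun z _ => ?_
          rw [Finset.mul_sum]
          refine Finset.sum_congr rfl fun v _ => ?_
          ring
      _ = ∑ x, ∑ c, ∑ z, ∑ v, (Rtil R (p,c) (x,z) * R (x,v) (d,c)) * Rtil R (q,z) (v,a) := by
          rw [Finset.sum_comm]
      _ = ∑ x, ∑ z, ∑ c, ∑ v, (Rtil R (p,c) (x,z) * R (x,v) (d,c)) * Rtil R (q,z) (v,a) := by
          exact Finset.sum_congr rfl fun x _ => Finset.sum_comm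
      _ = ∑ x, ∑ z, ∑ v, ∑ c, (Rtil R (p,c) (x,z) * R (x,v) (d,c)) * Rtil R (q,z) (v,a) := by
          exact Finset.sum_congr rfl fun x _ => Finset.sum_congr rfl fun z _ => Finset.sum_comm
      _ = ∑ z, ∑ x, ∑ v, ∑ c, (Rtil R (p,c) (x,z) * R (x,v) (d,c)) * Rtil R (q,z) (v,a) := by
          rw [Finset.sum_comm]
      _ = ∑ z, ∑ v, ∑ x, ∑ c, (Rtil R (p,c) (x,z) * R (x,v) (d,c)) * Rtil R (q,z) (v,a) := by
          exact Finset.sum_congr rfl fun z _ => Finset.sum_comm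
      _ = ∑ z, ∑ v, (∑ x, ∑ c, Rtil R (p,c) (x,z) * R (x,v) (d,c)) * Rtil R (q,z) (v,a) := by
          refine Finset.sum_congr rfl fun z _ => Finset.sum_congr rfl fun v _ => ?_
          rw [Finset.sum_mul]
          exact Finset.sum_congr rfl fun x _ => (Finset.sum_mul _ _ _).symm
      _ = ∑ z, ∑ v, (if p = d ∧ z = v then 1 else 0) * Rtil R (q,z) (v,a) := by
          refine Finset.sum_congr rfl fun z _ => Finset.sum_congr rfl fun v _ => ?_
          rw [F2 R hbi]
      _ = if p = d then Vmat R q a else 0 := by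
          by_cases hpd : p = d
          · simp [hpd, ite_and, Vmat]
          · simp [hpd]
  calc ∑ c, ∑ p, ∑ q, R⁻¹ (a,b) (p,q) *
          (∑ x, ∑ z, Rtil R (p,c) (x,z) * (∑ v, Rtil R (q,z) (v,a) * R (x,v) (d,c)))
      = ∑ p, ∑ q, ∑ c, R⁻¹ (a,b) (p,q) *
          (∑ x, ∑ z, Rtil R (p,c) (x,z) * (∑ v, Rtil R (q,z) (v,a) * R (x,v) (d,c))) := by
        rw [Finset.sum_comm]
        exact Finset.sum_congr rfl fun p _ => Finset.sum_comm
    _ = ∑ p, ∑ q, R⁻¹ (a,b) (p,q) *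
          (∑ c, ∑ x, ∑ z, Rtil R (p,c) (x,z) * (∑ v, Rtil R (q,z) (v,a) * R (x,v) (d,c))) := by
        exact Finset.sum_congr rfl fun p _ => Finset.sum_congr rfl fun q _ =>
          (Finset.mul_sum _ _ _).symm
    _ = ∑ q, R⁻¹ (a,b) (d,q) * Vmat R q a := by
        simp only [inner, mul_ite, mul_zero]
        rw [Finset.sum_comm]
        simp only [Finset.sum_ite_eq', Finset.mem_univ, if_true]

/-! ### Claim 2 -/

lemma claim2 (R : Mat2 n) (hQYB : QYB R) (hbi : Biinv R) :
    Tr2 ((R * Pmat n)⁻¹ * kron 1 (Vmat R)) = Vmat R * Umat R := by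
  have hdR : IsUnit R.det := (Matrix.isUnit_iff_isUnit_det _).1 hbi.1
  have hS1 : R * R⁻¹ = 1 := Matrix.mul_nonsing_inv _ hdR
  have hinv : (R * Pmat n)⁻¹ = Pmat n * R⁻¹ := by
    apply Matrix.inv_eq_right_inv
    rw [mul_assoc, ← mul_assoc (Pmat n), Pmat_mul_Pmat, one_mul, hS1]
  rw [hinv, Tr2_P_mul]
  have hE := congrArg Cmap (Epp R hQYB hbi)
  ext b d
  show (∑ e, ∑ q, R⁻¹ (e,b) (d,q) * Vmat R q e) = (Vmat R * Umat R) b d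
  rw [← Cleft R hbi b d, hE, Cright]
  show (∑ r, (∑ c, Rtil R (b,c) (c,r)) * (∑ a, Rtil R (a,r) (d,a))) = _
  rw [Matrix.mul_apply]
  refine Finset.sum_congr rfl fun r _ => ?_
  simp [Vmat, Umat]

/-! ### The flip R ↦ PRP -/

open Matrix

def flip (X : Mat2 n) : Mat2 n := Matrix.of fun p q => X (p.2, p.1) (q.2, q.1)

lemma flip_mul (X Y : Mat2 n) : flip (X * Y) = flip X * flip Y := by
  ext ⟨a,b⟩ ⟨c,d⟩
  show (X * Y) (b,a) (d,c) = ∑ p : Fin n × Fin n, X (b,a) (p.2,p.1) * Y (p.2,p.1) (d,c)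
  rw [Matrix.mul_apply, Fintype.sum_prod_type, Fintype.sum_prod_type]
  rw [Finset.sum_comm]

lemma flip_one : flip (1 : Mat2 n) = 1 := by
  ext ⟨a,b⟩ ⟨c,d⟩
  show (1 : Mat2 n) (b,a) (d,c) = (1 : Mat2 n) (a,b) (c,d)
  simp only [Matrix.one_apply, Prod.ext_iff]
  exact if_congr and_comm rfl rfl

lemma t2_flip (X : Mat2 n) : t2 (flip X) = flip ((t2 X)ᵀ) := by
  ext ⟨a,b⟩ ⟨c,d⟩; rfl

lemma t2_transpose (X : Mat2 n) : t2 (Xᵀ) = (t2 X)ᵀ := by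
  ext ⟨a,b⟩ ⟨c,d⟩; rfl

lemma isUnit_flip {X : Mat2 n} (h : IsUnit X) : IsUnit (flip X) := by
  have hd : IsUnit X.det := (Matrix.isUnit_iff_isUnit_det _).1 h
  refine ⟨⟨flip X, flip X⁻¹, ?_, ?_⟩, rfl⟩
  · rw [← flip_mul, Matrix.mul_nonsing_inv _ hd, flip_one]
  · rw [← flip_mul, Matrix.nonsing_inv_mul _ hd, flip_one]

lemma Biinv_flip {R : Mat2 n} (hbi : Biinv R) : Biinv (flip R) := by
  refine ⟨isUnit_flip hbi.1, ?_⟩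
  rw [t2_flip]
  apply isUnit_flip
  rw [Matrix.isUnit_iff_isUnit_det, Matrix.det_transpose]
  exact (Matrix.isUnit_iff_isUnit_det _).1 hbi.2

lemma Rtil_flip {R : Mat2 n} (hbi : Biinv R) : Rtil (flip R) = flip (Rtil R) := by
  have hd : IsUnit (t2 R).det := (Matrix.isUnit_iff_isUnit_det _).1 hbi.2
  have h2 : (flip ((t2 R)ᵀ))⁻¹ = flip (((t2 R)⁻¹)ᵀ) := by
    apply Matrix.inv_eq_right_inv
    rw [← flip_mul, ← Matrix.transpose_mul, Matrix.nonsing_inv_mul _ hd, Matrix.transpose_one,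
      flip_one]
  show t2 ((t2 (flip R))⁻¹) = _
  rw [t2_flip, h2, t2_flip, t2_transpose, Matrix.transpose_transpose]
  rfl

lemma Umat_flip {R : Mat2 n} (hbi : Biinv R) : Umat (flip R) = Vmat R := by
  ext i j
  show (∑ a, Rtil (flip R) (a,i) (j,a)) = ∑ a, Rtil R (i,a) (a,j)
  simp only [Rtil_flip hbi]
  rfl

lemma Vmat_flip {R : Mat2 n} (hbi : Biinv R) : Vmat (flip R) = Umat R := by
  ext i j
  show (∑ a, Rtil (flip R) (i,a) (a,j)) = ∑ a, Rtil R (a,i) (j,a)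
  simp only [Rtil_flip hbi]
  rfl

lemma flip_mul_P (R : Mat2 n) : flip R * Pmat n = Pmat n * R := by
  ext ⟨a,b⟩ ⟨c,d⟩
  rw [mul_Pmat_apply, Pmat_mul_apply]
  rfl

/-! ### QYB for the flip -/

lemma sum_rev3 (f : Fin n → Fin n → Fin n → ℂ) :
    ∑ x, ∑ y, ∑ z, f x y z = ∑ z, ∑ y, ∑ x, f x y z :=
  calc ∑ x, ∑ y, ∑ z, f x y z
      = ∑ y, ∑ x, ∑ z, f x y z := Finset.sum_comm
    _ = ∑ y, ∑ z, ∑ x, f x y z := Finset.sum_congr rfl fun _ _ => Finset.sum_comm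
    _ = ∑ z, ∑ y, ∑ x, f x y z := Finset.sum_comm

def sig3 (M : Mat3 n) : Mat3 n :=
  Matrix.of fun p q => M (p.2.2,p.2.1,p.1) (q.2.2,q.2.1,q.1)

lemma sig3_mul (M N : Mat3 n) : sig3 (M * N) = sig3 M * sig3 N := by
  ext ⟨a,b,c⟩ ⟨d,e,f⟩
  show (M * N) (c,b,a) (f,e,d) = ∑ p : Fin n × Fin n × Fin n,
    M (c,b,a) (p.2.2,p.2.1,p.1) * N (p.2.2,p.2.1,p.1) (f,e,d)
  rw [Matrix.mul_apply]
  simp only [Fintype.sum_prod_type]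
  exact sum_rev3 _

lemma sig3_A12 (X : Mat2 n) : sig3 (A12 X) = A23 (flip X) := by
  ext ⟨a,b,c⟩ ⟨d,e,f⟩
  show A12 X (c,b,a) (f,e,d) = _
  simp only [A12, A23, flip, Matrix.of_apply]
  ring

lemma sig3_A23 (X : Mat2 n) : sig3 (A23 X) = A12 (flip X) := by
  ext ⟨a,b,c⟩ ⟨d,e,f⟩
  show A23 X (c,b,a) (f,e,d) = _
  simp only [A12, A23, flip, Matrix.of_apply]
  ring

lemma sig3_A13 (X : Mat2 n) : sig3 (A13 X) = A13 (flip X) := by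
  ext ⟨a,b,c⟩ ⟨d,e,f⟩
  show A13 X (c,b,a) (f,e,d) = _
  rfl

lemma QYB_flip {R : Mat2 n} (hQYB : QYB R) : QYB (flip R) := by
  show A12 (flip R) * A13 (flip R) * A23 (flip R) = A23 (flip R) * A13 (flip R) * A12 (flip R)
  rw [← sig3_A23, ← sig3_A13, ← sig3_A12, ← sig3_mul, ← sig3_mul, ← sig3_mul, ← sig3_mul]
  rw [show A23 R * A13 R * A12 R = A12 R * A13 R * A23 R from hQYB.symm]

/-! ### Main theorem -/

theorem partial_trace_identities (n : ℕ) (hn : 1 ≤ n) (R : Mat2 n)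
    (hQYB : QYB R) (hbi : Biinv R) :
    Tr2 ((R * Pmat n) * kron 1 (Vmat R)) = 1 ∧
    Tr2 ((R * Pmat n)⁻¹ * kron 1 (Vmat R)) = Vmat R * Umat R ∧
    Tr2 ((Pmat n * R) * kron 1 (Umat R)) = 1 ∧
    Tr2 ((Pmat n * R)⁻¹ * kron 1 (Umat R)) = Umat R * Vmat R := by
  refine ⟨claim1 R hbi, claim2 R hQYB hbi, ?_, ?_⟩
  · have h := claim1 (flip R) (Biinv_flip hbi)
    rwa [flip_mul_P, Vmat_flip hbi] at h
  · have h := claim2 (flip R) (QYB_flip hQYB) (Biinv_flip hbi)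
    rwa [flip_mul_P, Vmat_flip hbi, Umat_flip hbi] at h
end

end Enhance
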